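/- If Γ is a reseminant graph with more than 5 vertices, then −1 is an eigenvalue of the adjacency matrix A(Γ) with multiplicity exactly |V(Γ)| − 5 (equivalently, the rank of I + A(Γ) equals 5); if Γ is the 5-cycle C₅ itself, then −1 is not an eigenvalue of A(Γ). -/

import Mathlib

/-- The 5-cycle `C₅` on `Fin 5`. -/
def cycle5 : SimpleGraph (Fin 5) :=
  SimpleGraph.fromRel (fun i j => j = i + 1)

instance : DecidableRel cycle5.Adj := fun i j =>
  decidable_of_iff (i ≠ j ∧ (j = i + 1 ∨ i = j + 1)) Iff.rfl

/-- Duplicating the vertex `v'` of a simple graph `G`: a new vertex (the `Sum.inr` vertex) is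
added, adjacent to `v'` and to every neighbor of `v'` in `G`. -/
def dupGraph {V : Type*} (G : SimpleGraph V) (v' : V) : SimpleGraph (V ⊕ Unit) where
  Adj x y :=
    match x, y with
    | Sum.inl a, Sum.inl b => G.Adj a b
    | Sum.inl a, Sum.inr _ => a = v' ∨ G.Adj a v'
    | Sum.inr _, Sum.inl b => b = v' ∨ G.Adj b v'
    | Sum.inr _, Sum.inr _ => False
  symm := by
    refine ⟨?_⟩
    rintro (a | a) (b | b) h
    · exact G.symm.symm _ _ h
    · exact h
    · exact h
    · exact h.elim
  loopless := by
    refine ⟨?_⟩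
    rintro (a | a) h
    · exact G.loopless.irrefl a h
    · exact h.elim

instance dupGraphAdjDecidable {V : Type*} [DecidableEq V] (G : SimpleGraph V)
    [DecidableRel G.Adj] (v' : V) : DecidableRel (dupGraph G v').Adj := fun x y =>
  match x, y with
  | Sum.inl a, Sum.inl b => inferInstanceAs (Decidable (G.Adj a b))
  | Sum.inl a, Sum.inr _ => inferInstanceAs (Decidable (a = v' ∨ G.Adj a v'))
  | Sum.inr _, Sum.inl b => inferInstanceAs (Decidable (b = v' ∨ G.Adj b v'))
  | Sum.inr _, Sum.inr _ => inferInstanceAs (Decidable False)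

/-- The vertex type of the reseminant graph built from `C₅` by the duplications recorded in
the list `l` (each entry records which of the five original cycle vertices is duplicated). -/
def resemType : List (Fin 5) → Type
  | [] => Fin 5
  | _ :: l => resemType l ⊕ Unit

instance resemTypeFintype : ∀ l : List (Fin 5), Fintype (resemType l)
  | [] => inferInstanceAs (Fintype (Fin 5))
  | _ :: l => letI := resemTypeFintype l; inferInstanceAs (Fintype (resemType l ⊕ Unit))

instance resemTypeDecEq : ∀ l : List (Fin 5), DecidableEq (resemType l)
  | [] => inferInstanceAs (DecidableEq (Fin 5))
  | _ :: l => letI := resemTypeDecEq l; inferInstanceAs (DecidableEq (resemType l ⊕ Unit))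

/-- The copy, inside `resemType l`, of an original vertex of the 5-cycle. -/
def origVert : (l : List (Fin 5)) → Fin 5 → resemType l
  | [], i => i
  | _ :: l, i => Sum.inl (origVert l i)

/-- The reseminant graph obtained from the 5-cycle `C₅` by the finite sequence of vertex
duplications recorded in `l`: for `l = v :: l'`, the vertex (the copy of the original cycle
vertex) `v` is duplicated in the graph built from `l'`. -/
def resemGraph : (l : List (Fin 5)) → SimpleGraph (resemType l)
  | [] => cycle5
  | v :: l => dupGraph (resemGraph l) (origVert l v)

instance resemGraphAdjDecidable : ∀ l : List (Fin 5), DecidableRel (resemGraph l).Adj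
  | [] => inferInstanceAs (DecidableRel cycle5.Adj)
  | v :: l =>
    letI := resemGraphAdjDecidable l
    inferInstanceAs (DecidableRel (dupGraph (resemGraph l) (origVert l v)).Adj)

/-- A simple graph is *reseminant* if it is (isomorphic to) a graph obtained from the 5-cycle
`C₅` by a finite sequence of vertex duplications, each duplicating one of the five original
cycle vertices. -/
def IsReseminant {V : Type*} (Γ : SimpleGraph V) : Prop :=
  ∃ l : List (Fin 5), Nonempty (Γ ≃g resemGraph l)

/-- `R̃_n`: the reseminant graph on `n + 5` vertices obtained from `C₅` by `n` successive
duplications, all duplicating the same fixed vertex `0` of the original 5-cycle. -/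
def tildeR (n : ℕ) : SimpleGraph (resemType (List.replicate n 0)) :=
  resemGraph (List.replicate n 0)

/-!
Duplicating `v'` gives `I + A` a new row and column equal to those of `v'`: the twin is adjacent
to `v'` and to its neighbours, and the diagonal `1` of `I` stands in for the edge to `v'`. Hence
`rank (I + A)` never changes, and for `C₅` it is `5` because `det (I + A(C₅)) = 3`. As `A` is
symmetric, the multiplicity of `-1` as a root of its characteristic polynomial is the nullity
`|V| - rank (I + A)` of `I + A`.
-/

open Polynomial Matrix

namespace Matrix

theorem rank_submatrix_of_surjective {m n m₀ n₀ R : Type*} [CommSemiring R]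
    [StrongRankCondition R] [Fintype n] [Fintype n₀] (A : Matrix m n R) {r : m₀ → m}
    {c : n₀ → n} (hr : Function.Surjective r) (hc : Function.Surjective c) :
    (A.submatrix r c).rank = A.rank := by
  refine le_antisymm (rank_submatrix_le A r c) ?_
  calc A.rank = ((A.submatrix r c).submatrix (Function.surjInv hr) (Function.surjInv hc)).rank := by
        rw [submatrix_submatrix, (Function.rightInverse_surjInv hr).comp_eq_id,
          (Function.rightInverse_surjInv hc).comp_eq_id, submatrix_id_id]
    _ ≤ (A.submatrix r c).rank := rank_submatrix_le _ _ _

namespace IsHermitian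

variable {𝕜 n : Type*} [RCLike 𝕜] [Fintype n] [DecidableEq n] {A : Matrix n n 𝕜}

theorem rootMultiplicity_zero_charpoly_add_rank (hA : A.IsHermitian) :
    A.charpoly.rootMultiplicity 0 + A.rank = Fintype.card n := by
  have hmult : A.charpoly.rootMultiplicity 0 = Fintype.card {i // hA.eigenvalues i = 0} := by
    rw [← count_roots, hA.roots_charpoly_eq_eigenvalues, Multiset.count_map, Fintype.card_subtype]
    simp only [Finset.card, Finset.filter_val, Function.comp_apply]
    congr 1
    exact Multiset.filter_congr fun i _ => by rw [eq_comm, RCLike.ofReal_eq_zero, eq_comm]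
  rw [hmult, hA.rank_eq_card_non_zero_eigs, Fintype.card_subtype_compl,
    Nat.add_sub_cancel' (Fintype.card_subtype_le _)]

theorem rootMultiplicity_charpoly_add_rank_sub (hA : A.IsHermitian) (μ : ℝ) :
    A.charpoly.rootMultiplicity (μ : 𝕜) + (A - scalar n (μ : 𝕜)).rank = Fintype.card n := by
  have hB : (A - scalar n (μ : 𝕜)).IsHermitian := hA.sub (by simp [IsHermitian, scalar_apply])
  rw [rootMultiplicity_eq_rootMultiplicity, ← charpoly_sub_scalar]
  exact hB.rootMultiplicity_zero_charpoly_add_rank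

end IsHermitian

end Matrix

section Reseminant

open SimpleGraph

variable {R : Type*}

theorem one_add_adjMatrix_dupGraph [NonAssocSemiring R] {V : Type*} [DecidableEq V]
    (G : SimpleGraph V) [DecidableRel G.Adj] (v' : V) :
    1 + (dupGraph G v').adjMatrix R =
      (1 + G.adjMatrix R).submatrix (Sum.elim id fun _ => v') (Sum.elim id fun _ => v') := by
  ext i j
  rcases i with a | a <;> rcases j with b | b <;>
    simp only [Matrix.add_apply, Matrix.one_apply, adjMatrix_apply, submatrix_apply] <;>
    split_ifs <;> simp_all [dupGraph, G.adj_comm, eq_comm]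

theorem rank_one_add_adjMatrix_dupGraph [CommRing R] [StrongRankCondition R] {V : Type*}
    [Fintype V] [DecidableEq V] (G : SimpleGraph V) [DecidableRel G.Adj] (v' : V) :
    (1 + (dupGraph G v').adjMatrix R).rank = (1 + G.adjMatrix R).rank := by
  have hsurj : Function.Surjective (Sum.elim id fun _ : Unit => v') := fun a => ⟨Sum.inl a, rfl⟩
  rw [one_add_adjMatrix_dupGraph, rank_submatrix_of_surjective _ hsurj hsurj]

theorem rank_one_add_adjMatrix_of_iso [CommRing R] {V W : Type*} [Fintype V] [DecidableEq V]
    [Fintype W] [DecidableEq W] {G : SimpleGraph V} {H : SimpleGraph W} [DecidableRel G.Adj]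
    [DecidableRel H.Adj] (e : G ≃g H) :
    (1 + G.adjMatrix R).rank = (1 + H.adjMatrix R).rank := by
  have h : 1 + G.adjMatrix R = (1 + H.adjMatrix R).submatrix e.toEquiv e.toEquiv := by
    rw [← e.toEmbedding.submatrix_adjMatrix R, ← submatrix_one_equiv e.toEquiv]
    rfl
  rw [h, rank_submatrix]

theorem det_one_add_adjMatrix_cycle5 : (1 + cycle5.adjMatrix ℝ).det = 3 := by
  simp only [det_succ_row_zero, Fin.sum_univ_succ, Finset.univ_unique, Fin.default_eq_zero,
    Finset.sum_singleton, det_unique, submatrix_apply, Matrix.add_apply, one_apply,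
    adjMatrix_apply]
  simp +decide only []
  norm_num

theorem rank_one_add_adjMatrix_resemGraph :
    ∀ l : List (Fin 5), (1 + (resemGraph l).adjMatrix ℝ).rank = 5
  | [] => by
    have hunit : IsUnit (1 + cycle5.adjMatrix ℝ) := by
      rw [isUnit_iff_isUnit_det, det_one_add_adjMatrix_cycle5]
      norm_num
    show (1 + cycle5.adjMatrix ℝ).rank = 5
    simpa using rank_of_isUnit _ hunit
  | v :: l => (rank_one_add_adjMatrix_dupGraph _ _).trans (rank_one_add_adjMatrix_resemGraph l)

end Reseminant

theorem SimpleGraph.rootMultiplicity_neg_one_charpoly_adjMatrix_add_rank {V : Type*} [Fintype V]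
    [DecidableEq V] (G : SimpleGraph V) [DecidableRel G.Adj] :
    (G.adjMatrix ℝ).charpoly.rootMultiplicity (-1) + (1 + G.adjMatrix ℝ).rank =
      Fintype.card V := by
  have h := (G.isHermitian_adjMatrix ℝ).rootMultiplicity_charpoly_add_rank_sub (-1)
  rwa [RCLike.ofReal_real_eq_id, id, map_neg, map_one, sub_neg_eq_add, add_comm _ 1] at h

/-- If `Γ` is a reseminant graph with more than 5 vertices, then `−1` is an
eigenvalue of the adjacency matrix `A(Γ)` with multiplicity exactly `|V(Γ)| − 5` (as a root of
the characteristic polynomial), equivalently the rank of `I + A(Γ)` equals `5`; if `Γ` is the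
5-cycle `C₅` itself, then `−1` is not an eigenvalue of `A(Γ)`. -/
theorem neg_one_eigenvalue_reseminant {V : Type*} [Fintype V] [DecidableEq V]
    (Γ : SimpleGraph V) [DecidableRel Γ.Adj] (h : IsReseminant Γ) :
    (5 < Fintype.card V →
      (Γ.adjMatrix ℝ).charpoly.rootMultiplicity (-1) = Fintype.card V - 5 ∧
      (1 + Γ.adjMatrix ℝ).rank = 5) ∧
    (Nonempty (Γ ≃g cycle5) → ¬ (Γ.adjMatrix ℝ).charpoly.IsRoot (-1)) := by
  obtain ⟨l, ⟨e⟩⟩ := h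
  have hrank : (1 + Γ.adjMatrix ℝ).rank = 5 :=
    (rank_one_add_adjMatrix_of_iso e).trans (rank_one_add_adjMatrix_resemGraph l)
  have hsum := Γ.rootMultiplicity_neg_one_charpoly_adjMatrix_add_rank
  refine ⟨fun _ => ⟨by omega, hrank⟩, fun ⟨e'⟩ hroot => ?_⟩
  have hcard : Fintype.card V = 5 := by simpa using Fintype.card_congr e'.toEquiv
  have hpos := (rootMultiplicity_pos (charpoly_monic (Γ.adjMatrix ℝ)).ne_zero).mpr hroot
  omega
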